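/- Let $U \in \mathbb{R}^{N_1 \times r}$ and $V \in \mathbb{R}^{N_2 \times r}$ have orthonormal columns, let $S \in \mathbb{R}^{r \times r}$, let $A_1 \in \mathbb{R}^{N_1 \times N_1}$, $A_2 \in \mathbb{R}^{N_2 \times N_2}$, $U_0 \in \mathbb{R}^{N_1 \times r_0}$, $S_0 \in \mathbb{R}^{r_0 \times r_0}$, $V_0 \in \mathbb{R}^{N_2 \times r_0}$, with $U U^T U_0 = U_0$ and $V V^T V_0 = V_0$. Suppose $[\,U,\ A_1 U\,] = Q_U R_U$ and $[\,V,\ A_2 V\,] = Q_V R_V$ where $Q_U$ and $Q_V$ have orthonormal columns and $R_U, R_V \in \mathbb{R}^{2r \times 2r}$. Then, with $F = U S V^T$ and $\tilde{B} = (U^T U_0) S_0 (V^T V_0)^T$, the residual satisfies $\| A_1 F + F A_2^T - U_0 S_0 V_0^T \|_F = \left\| R_U \begin{pmatrix} -\tilde{B} & S \\ S & 0 \end{pmatrix} R_V^T \right\|_F$. -/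

import Mathlib

open Matrix
open scoped BigOperators

/-!
Since `[U, A₁U] = Q_U R_U` and `[V, A₂V] = Q_V R_V`, the residual factors as
`[U, A₁U] · [[-B̃, S], [S, 0]] · [V, A₂V]ᵀ = Q_U (R_U [[-B̃, S], [S, 0]] R_Vᵀ) Q_Vᵀ`:
the block product expands to `A₁F + FA₂ᵀ - U B̃ Vᵀ`, and `U B̃ Vᵀ = U₀S₀V₀ᵀ` because `UUᵀ` and
`VVᵀ` fix the columns of `U₀` and `V₀`. Multiplying by matrices with orthonormal columns on either
side preserves the Frobenius norm.
-/

noncomputable def frob {m n : Type*} [Fintype m] [Fintype n] (M : Matrix m n ℝ) : ℝ :=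
  Real.sqrt (∑ i, ∑ j, (M i j) ^ 2)

section Frobenius

variable {m n p : Type*} [Fintype m] [Fintype n] [Fintype p]

lemma frob_eq_sqrt_trace (M : Matrix m n ℝ) : frob M = Real.sqrt (Mᵀ * M).trace := by
  unfold frob
  rw [Matrix.trace, Finset.sum_comm]
  simp [Matrix.diag, Matrix.mul_apply, sq]

lemma frob_transpose (M : Matrix m n ℝ) : frob Mᵀ = frob M := by
  unfold frob
  rw [Finset.sum_comm]
  rfl

lemma frob_mul_of_orthonormal [DecidableEq p] {Q : Matrix m p ℝ} (hQ : Qᵀ * Q = 1)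
    (X : Matrix p n ℝ) : frob (Q * X) = frob X := by
  rw [frob_eq_sqrt_trace, frob_eq_sqrt_trace, Matrix.transpose_mul, Matrix.mul_assoc,
    ← Matrix.mul_assoc Qᵀ, hQ, Matrix.one_mul]

lemma frob_mul_mul_transpose_of_orthonormal {q : Type*} [Fintype q] [DecidableEq p]
    [DecidableEq q] {Q : Matrix m p ℝ} {P : Matrix n q ℝ} (hQ : Qᵀ * Q = 1) (hP : Pᵀ * P = 1)
    (X : Matrix p q ℝ) : frob (Q * X * Pᵀ) = frob X := by
  rw [Matrix.mul_assoc, frob_mul_of_orthonormal hQ, ← frob_transpose, Matrix.transpose_mul,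
    Matrix.transpose_transpose, frob_mul_of_orthonormal hP, frob_transpose]

end Frobenius

section BlockFactorization

variable {α : Type*} [CommRing α] {m₁ m₂ k k₀ : Type*} [Fintype m₁] [Fintype m₂] [Fintype k]
  [Fintype k₀]

lemma fromCols_mul_fromBlocks_mul_transpose_fromCols (U : Matrix m₁ k α) (V : Matrix m₂ k α)
    (A₁ : Matrix m₁ m₁ α) (A₂ : Matrix m₂ m₂ α) (S B : Matrix k k α) :
    fromCols U (A₁ * U) * fromBlocks (-B) S S 0 * (fromCols V (A₂ * V))ᵀ
      = A₁ * (U * S * Vᵀ) + U * S * Vᵀ * A₂ᵀ - U * B * Vᵀ := by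
  rw [Matrix.transpose_fromCols, Matrix.fromCols_mul_fromBlocks, Matrix.fromCols_mul_fromRows]
  simp only [Matrix.transpose_mul, Matrix.mul_zero, add_zero, Matrix.mul_neg, Matrix.add_mul,
    Matrix.neg_mul, Matrix.mul_assoc]
  abel

lemma mul_compressed_mul_transpose_eq {U : Matrix m₁ k α}
    {V : Matrix m₂ k α} {U₀ : Matrix m₁ k₀ α} {V₀ : Matrix m₂ k₀ α}
    (hU₀ : U * Uᵀ * U₀ = U₀) (hV₀ : V * Vᵀ * V₀ = V₀) (S₀ : Matrix k₀ k₀ α) :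
    U * ((Uᵀ * U₀) * S₀ * (Vᵀ * V₀)ᵀ) * Vᵀ = U₀ * S₀ * V₀ᵀ := by
  calc U * ((Uᵀ * U₀) * S₀ * (Vᵀ * V₀)ᵀ) * Vᵀ = (U * Uᵀ * U₀) * S₀ * (V * Vᵀ * V₀)ᵀ := by
        simp only [Matrix.transpose_mul, Matrix.transpose_transpose, Matrix.mul_assoc]
    _ = U₀ * S₀ * V₀ᵀ := by rw [hU₀, hV₀]

end BlockFactorization

theorem residual_norm_via_qr_general (N1 N2 r r0 : ℕ)
    (U : Matrix (Fin N1) (Fin r) ℝ) (V : Matrix (Fin N2) (Fin r) ℝ)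
    (S : Matrix (Fin r) (Fin r) ℝ)
    (A1 : Matrix (Fin N1) (Fin N1) ℝ) (A2 : Matrix (Fin N2) (Fin N2) ℝ)
    (U0 : Matrix (Fin N1) (Fin r0) ℝ) (S0 : Matrix (Fin r0) (Fin r0) ℝ)
    (V0 : Matrix (Fin N2) (Fin r0) ℝ)
    (hU0 : U * Uᵀ * U0 = U0) (hV0 : V * Vᵀ * V0 = V0)
    (QU : Matrix (Fin N1) (Fin r ⊕ Fin r) ℝ) (RU : Matrix (Fin r ⊕ Fin r) (Fin r ⊕ Fin r) ℝ)
    (QV : Matrix (Fin N2) (Fin r ⊕ Fin r) ℝ) (RV : Matrix (Fin r ⊕ Fin r) (Fin r ⊕ Fin r) ℝ)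
    (hQU : QUᵀ * QU = 1) (hQV : QVᵀ * QV = 1)
    (hQRU : Matrix.fromCols U (A1 * U) = QU * RU)
    (hQRV : Matrix.fromCols V (A2 * V) = QV * RV) :
    frob (A1 * (U * S * Vᵀ) + (U * S * Vᵀ) * A2ᵀ - U0 * S0 * V0ᵀ)
      = frob (RU * Matrix.fromBlocks (-((Uᵀ * U0) * S0 * (Vᵀ * V0)ᵀ)) S S 0 * RVᵀ) := by
  set M := Matrix.fromBlocks (-((Uᵀ * U0) * S0 * (Vᵀ * V0)ᵀ)) S S 0
  have residual_eq : A1 * (U * S * Vᵀ) + (U * S * Vᵀ) * A2ᵀ - U0 * S0 * V0ᵀ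
      = QU * (RU * M * RVᵀ) * QVᵀ := by
    calc A1 * (U * S * Vᵀ) + (U * S * Vᵀ) * A2ᵀ - U0 * S0 * V0ᵀ
        = fromCols U (A1 * U) * M * (fromCols V (A2 * V))ᵀ := by
          rw [fromCols_mul_fromBlocks_mul_transpose_fromCols,
            mul_compressed_mul_transpose_eq hU0 hV0]
      _ = QU * (RU * M * RVᵀ) * QVᵀ := by
          simp only [hQRU, hQRV, Matrix.transpose_mul, Matrix.mul_assoc]
  rw [residual_eq, frob_mul_mul_transpose_of_orthonormal hQU hQV]

/-- Efficient evaluation of the Sylvester residual norm: with QR factorizations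
`[U, A1 U] = Q_U R_U` and `[V, A2 V] = Q_V R_V` (with orthonormal `Q_U, Q_V`),
the Frobenius norm of the residual `A1 F + F A2ᵀ - U0 S0 V0ᵀ` (for `F = U S Vᵀ`)
equals `‖R_U [[-B̃, S], [S, 0]] R_Vᵀ‖_F`. -/
theorem residual_norm_via_qr (N1 N2 r r0 : ℕ)
    (U : Matrix (Fin N1) (Fin r) ℝ) (V : Matrix (Fin N2) (Fin r) ℝ)
    (hU : Uᵀ * U = 1) (hV : Vᵀ * V = 1)
    (S : Matrix (Fin r) (Fin r) ℝ)
    (A1 : Matrix (Fin N1) (Fin N1) ℝ) (A2 : Matrix (Fin N2) (Fin N2) ℝ)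
    (U0 : Matrix (Fin N1) (Fin r0) ℝ) (S0 : Matrix (Fin r0) (Fin r0) ℝ)
    (V0 : Matrix (Fin N2) (Fin r0) ℝ)
    (hU0 : U * Uᵀ * U0 = U0) (hV0 : V * Vᵀ * V0 = V0)
    (QU : Matrix (Fin N1) (Fin r ⊕ Fin r) ℝ) (RU : Matrix (Fin r ⊕ Fin r) (Fin r ⊕ Fin r) ℝ)
    (QV : Matrix (Fin N2) (Fin r ⊕ Fin r) ℝ) (RV : Matrix (Fin r ⊕ Fin r) (Fin r ⊕ Fin r) ℝ)
    (hQU : QUᵀ * QU = 1) (hQV : QVᵀ * QV = 1)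
    (hQRU : Matrix.fromCols U (A1 * U) = QU * RU)
    (hQRV : Matrix.fromCols V (A2 * V) = QV * RV) :
    frob (A1 * (U * S * Vᵀ) + (U * S * Vᵀ) * A2ᵀ - U0 * S0 * V0ᵀ)
      = frob (RU * Matrix.fromBlocks (-((Uᵀ * U0) * S0 * (Vᵀ * V0)ᵀ)) S S 0 * RVᵀ) :=
  residual_norm_via_qr_general N1 N2 r r0 U V S A1 A2 U0 S0 V0 hU0 hV0 QU RU QV RV hQU hQV hQRU hQRV
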